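/- Let G be a finite connected multigraph and let C_1 and C_2 be oriented simple circuits of G, viewed as vectors in C(G,ℝ). Then there exist oriented simple circuits {D_j}_{j∈J} (not uniquely determined) such that: (i) no edge of G is traversed in opposite directions by two of the circuits D_j, i.e. for every edge e the e-coordinates of the vectors D_j are never of opposite signs; and (ii) in H_1(G,ℝ) one has [C_1 + C_2] = Σ_{j∈J} [D_j]. -/
import Mathlib


noncomputable section

/-- A finite connected multigraph with a fixed orientation of each edge. -/
structure Multigraph where
  V : Type
  E : Type
  [finV : Fintype V]
  [finE : Fintype E]
  [decV : DecidableEq V]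
  [decE : DecidableEq E]
  src : E → V
  tgt : E → V
  connected : ∀ u v : V, Relation.ReflTransGen
    (fun a b => ∃ e, (src e = a ∧ tgt e = b) ∨ (src e = b ∧ tgt e = a)) u v

attribute [instance] Multigraph.finV Multigraph.finE Multigraph.decV Multigraph.decE

namespace Multigraph

variable (G : Multigraph)

/-- The simplicial boundary map `∂ : C(G,ℝ) = ℝ^E → ℝ^V`. -/
def boundary : (G.E → ℝ) →ₗ[ℝ] (G.V → ℝ) :=
  LinearMap.pi fun v =>
    ∑ e : G.E, (((if G.tgt e = v then (1 : ℝ) else 0) - (if G.src e = v then 1 else 0)) •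
      LinearMap.proj e)

/-- The first real homology of `G`, as the subspace of 1-cycles in `ℝ^E`. -/
def H1 : Submodule ℝ (G.E → ℝ) := LinearMap.ker G.boundary

/-- The weighted ℓ¹-norm on chains; its restriction to `H1` is the stable norm. -/
def wnorm (w : G.E → ℝ) (u : G.E → ℝ) : ℝ := ∑ e : G.E, w e * |u e|

/-- The stable ball: unit ball of the stable norm in `H_1(G,ℝ)`. -/
def stableBall (w : G.E → ℝ) : Set (G.E → ℝ) :=
  {u | u ∈ G.H1 ∧ G.wnorm w u ≤ 1}

/-- An oriented simple circuit of `G`: a closed oriented edge walk visiting each of its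
vertices exactly once (starting point immaterial, encoded by indexing over `ZMod n`). -/
structure Circuit (G : Multigraph) where
  n : ℕ
  npos : 0 < n
  vert : ZMod n → G.V
  edge : ZMod n → G.E
  dir : ZMod n → Bool
  vertInj : Function.Injective vert
  edgeInj : Function.Injective edge
  incid : ∀ i, (dir i = true ∧ G.src (edge i) = vert i ∧ G.tgt (edge i) = vert (i + 1)) ∨
      (dir i = false ∧ G.src (edge i) = vert (i + 1) ∧ G.tgt (edge i) = vert i)

/-- The 1-chain associated to an oriented simple circuit. -/
def Circuit.chain {G : Multigraph} (C : Circuit G) : G.E → ℝ := fun e =>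
  haveI : NeZero C.n := ⟨C.npos.ne'⟩
  ∑ i : ZMod C.n, if C.edge i = e then (if C.dir i then (1 : ℝ) else -1) else 0

/-- The `w`-length of an oriented simple circuit. -/
def Circuit.wlen {G : Multigraph} (C : Circuit G) (w : G.E → ℝ) : ℝ :=
  haveI : NeZero C.n := ⟨C.npos.ne'⟩
  ∑ i : ZMod C.n, w (C.edge i)

end Multigraph

namespace Multigraph

variable {G : Multigraph}

lemma boundary_apply (u : G.E → ℝ) (v : G.V) :
    G.boundary u v = ∑ e : G.E,
      (((if G.tgt e = v then (1 : ℝ) else 0) - (if G.src e = v then 1 else 0)) * u e) := by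
  simp [boundary]

lemma mem_H1_iff {u : G.E → ℝ} :
    u ∈ G.H1 ↔ ∀ v : G.V, (∑ e : G.E,
      (((if G.tgt e = v then (1 : ℝ) else 0) - (if G.src e = v then 1 else 0)) * u e)) = 0 := by
  rw [H1, LinearMap.mem_ker]
  constructor
  · intro h v
    rw [← boundary_apply, h]
    rfl
  · intro h
    funext v
    rw [boundary_apply]
    exact h v

lemma Circuit.chain_apply (C : Circuit G) (i : ZMod C.n) :
    C.chain (C.edge i) = if C.dir i then (1 : ℝ) else -1 := by
  haveI : NeZero C.n := ⟨C.npos.ne'⟩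
  show (∑ j : ZMod C.n, if C.edge j = C.edge i then (if C.dir j then (1 : ℝ) else -1) else 0) = _
  rw [Finset.sum_eq_single i]
  · simp
  · intro j _ hj
    exact if_neg fun h => hj (C.edgeInj h)
  · simp

lemma Circuit.chain_eq_zero (C : Circuit G) {e : G.E} (h : ∀ i, C.edge i ≠ e) :
    C.chain e = 0 := by
  haveI : NeZero C.n := ⟨C.npos.ne'⟩
  exact Finset.sum_eq_zero fun i _ => if_neg (h i)

lemma Circuit.chain_int (C : Circuit G) (e : G.E) : ∃ z : ℤ, C.chain e = z := by
  haveI : NeZero C.n := ⟨C.npos.ne'⟩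
  refine ⟨∑ i : ZMod C.n, if C.edge i = e then (if C.dir i then (1 : ℤ) else -1) else 0, ?_⟩
  show (∑ i : ZMod C.n, if C.edge i = e then (if C.dir i then (1 : ℝ) else -1) else 0) = _
  push_cast
  refine Finset.sum_congr rfl fun i _ => ?_
  split
  · split <;> norm_num
  · norm_num

lemma Circuit.abs_chain_le_one (C : Circuit G) (e : G.E) : |C.chain e| ≤ 1 := by
  by_cases h : ∃ i, C.edge i = e
  · obtain ⟨i, rfl⟩ := h
    rw [C.chain_apply i]
    split <;> norm_num
  · push_neg at h
    rw [C.chain_eq_zero h]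
    norm_num

lemma Circuit.chain_mem_H1 (C : Circuit G) : C.chain ∈ G.H1 := by
  haveI : NeZero C.n := ⟨C.npos.ne'⟩
  rw [mem_H1_iff]
  intro v
  calc ∑ e : G.E, (((if G.tgt e = v then (1 : ℝ) else 0) - (if G.src e = v then 1 else 0)) * C.chain e)
      = ∑ e : G.E, ∑ i : ZMod C.n, (if C.edge i = e then
          (((if G.tgt e = v then (1 : ℝ) else 0) - (if G.src e = v then 1 else 0)) *
            (if C.dir i then (1 : ℝ) else -1)) else 0) := by
        refine Finset.sum_congr rfl fun e _ => ?_
        show _ * (∑ i : ZMod C.n, if C.edge i = e then (if C.dir i then (1 : ℝ) else -1) else 0) = _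
        rw [Finset.mul_sum]
        refine Finset.sum_congr rfl fun i _ => ?_
        split <;> simp
    _ = ∑ i : ZMod C.n, ∑ e : G.E, (if C.edge i = e then
          (((if G.tgt e = v then (1 : ℝ) else 0) - (if G.src e = v then 1 else 0)) *
            (if C.dir i then (1 : ℝ) else -1)) else 0) := Finset.sum_comm
    _ = ∑ i : ZMod C.n,
          (((if G.tgt (C.edge i) = v then (1 : ℝ) else 0) - (if G.src (C.edge i) = v then 1 else 0)) *
            (if C.dir i then (1 : ℝ) else -1)) := by
        refine Finset.sum_congr rfl fun i _ => ?_
        rw [Finset.sum_ite_eq Finset.univ (C.edge i)]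
        simp
    _ = ∑ i : ZMod C.n,
          ((if C.vert (i + 1) = v then (1 : ℝ) else 0) - (if C.vert i = v then 1 else 0)) := by
        refine Finset.sum_congr rfl fun i _ => ?_
        rcases C.incid i with ⟨hd, hs, ht⟩ | ⟨hd, hs, ht⟩ <;> rw [hd, hs, ht] <;> simp
    _ = 0 := by
        rw [Finset.sum_sub_distrib]
        rw [Fintype.sum_equiv (Equiv.addRight (1 : ZMod C.n))
          (fun i => if C.vert (i + 1) = v then (1 : ℝ) else 0)
          (fun i => if C.vert i = v then (1 : ℝ) else 0) (fun i => rfl)]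
        rw [sub_self]

/-- Conformity of a circuit with a chain: each step traverses an edge in the direction of
the (nonzero) value of `u` there. -/
def Conforms (u : G.E → ℝ) (C : Circuit G) : Prop :=
  ∀ i : ZMod C.n, (C.dir i = true → 0 < u (C.edge i)) ∧ (C.dir i = false → u (C.edge i) < 0)

lemma Conforms.sign {u : G.E → ℝ} {C : Circuit G} (h : Conforms u C) (e : G.E) :
    (0 < C.chain e → 0 < u e) ∧ (C.chain e < 0 → u e < 0) := by
  by_cases hmem : ∃ i, C.edge i = e
  · obtain ⟨i, rfl⟩ := hmem
    rw [C.chain_apply i]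
    cases hdi : C.dir i
    · constructor
      · intro hc; norm_num at hc
      · intro _; exact (h i).2 hdi
    · constructor
      · intro _; exact (h i).1 hdi
      · intro hc; norm_num at hc
  · push_neg at hmem
    rw [C.chain_eq_zero hmem]
    exact ⟨fun hc => absurd hc (by norm_num), fun hc => absurd hc (by norm_num)⟩

/-- `e` is an outgoing edge at `v` with respect to the orientation induced by `u`. -/
def Out (G : Multigraph) (u : G.E → ℝ) (v : G.V) (e : G.E) : Prop :=
  (0 < u e ∧ G.src e = v) ∨ (u e < 0 ∧ G.tgt e = v)

/-- The head of `e` in the orientation induced by `u`. -/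
def nxt (G : Multigraph) (u : G.E → ℝ) (e : G.E) : G.V :=
  if 0 < u e then G.tgt e else G.src e

lemma step_lemma {u : G.E → ℝ} (hu : u ∈ G.H1) {v : G.V} {e : G.E} (h : Out G u v e) :
    ∃ e', Out G u (nxt G u e) e' := by
  by_contra hno
  push_neg at hno
  set v' := nxt G u e with hv'
  have hterm : ∀ e' : G.E,
      0 ≤ ((if G.tgt e' = v' then (1 : ℝ) else 0) - (if G.src e' = v' then 1 else 0)) * u e' := by
    intro e'
    have hn := hno e'
    rw [Out] at hn
    push_neg at hn
    by_cases h1 : G.tgt e' = v' <;> by_cases h2 : G.src e' = v' <;> simp [h1, h2]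
    · by_contra hc
      push_neg at hc
      exact (hn.2 hc) h1
    · by_contra hc
      push_neg at hc
      exact (hn.1 hc) h2
  have hepos : 0 < ((if G.tgt e = v' then (1 : ℝ) else 0) - (if G.src e = v' then 1 else 0)) * u e := by
    rcases h with ⟨hpos, hsrc⟩ | ⟨hneg, htgt⟩
    · have htgt' : G.tgt e = v' := by rw [hv', nxt, if_pos hpos]
      have hsrcne : G.src e ≠ v' := fun hsr => hno e (Or.inl ⟨hpos, hsr⟩)
      rw [if_pos htgt', if_neg hsrcne]
      linarith
    · have hsrc' : G.src e = v' := by rw [hv', nxt, if_neg (by linarith)]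
      have htgtne : G.tgt e ≠ v' := fun ht => hno e (Or.inr ⟨hneg, ht⟩)
      rw [if_neg htgtne, if_pos hsrc']
      nlinarith
  have hsum := (mem_H1_iff.mp hu) v'
  have hz := (Finset.sum_eq_zero_iff_of_nonneg (fun e' _ => hterm e')).mp hsum e (Finset.mem_univ e)
  linarith

lemma exists_conforming (u : G.E → ℝ) (hu : u ∈ G.H1) (hne : u ≠ 0) :
    ∃ C : Circuit G, Conforms u C := by
  obtain ⟨e0, he0⟩ : ∃ e, u e ≠ 0 := by
    by_contra h
    push_neg at h
    exact hne (funext h)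
  obtain ⟨v0, ee0, h0⟩ : ∃ v e, Out G u v e := by
    rcases lt_or_gt_of_ne he0 with h | h
    · exact ⟨G.tgt e0, e0, Or.inr ⟨h, rfl⟩⟩
    · exact ⟨G.src e0, e0, Or.inl ⟨h, rfl⟩⟩
  let S := {p : G.V × G.E // Out G u p.1 p.2}
  let F : S → S := fun p =>
    ⟨(nxt G u p.1.2, Classical.choose (step_lemma hu p.2)),
      Classical.choose_spec (step_lemma hu p.2)⟩
  let W : ℕ → S := fun k => F^[k] ⟨(v0, ee0), h0⟩
  let vv : ℕ → G.V := fun k => (W k).1.1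
  let ev : ℕ → G.E := fun k => (W k).1.2
  have hOut : ∀ k, Out G u (vv k) (ev k) := fun k => (W k).2
  have hnext : ∀ k, vv (k + 1) = nxt G u (ev k) := by
    intro k
    show (W (k + 1)).1.1 = _
    have hW : W (k + 1) = F (W k) := Function.iterate_succ_apply' F k _
    rw [hW]
  have hP : ∃ j, ∃ i, i < j ∧ vv i = vv j := by
    obtain ⟨a, b, hab, hvab⟩ := Fintype.exists_ne_map_eq_of_card_lt
      (fun i : Fin (Fintype.card G.V + 1) => vv i) (by simp)
    rcases hab.lt_or_gt with h | h
    · exact ⟨b, a, h, hvab⟩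
    · exact ⟨a, b, h, hvab.symm⟩
  set j0 := Nat.find hP with hj0
  obtain ⟨i0, hij, hveq⟩ := Nat.find_spec hP
  have hinj : ∀ a b, a < b → b < j0 → vv a ≠ vv b := by
    intro a b hab hbj heq
    exact Nat.find_min hP hbj ⟨a, hab, heq⟩
  set n := j0 - i0 with hn
  have hnpos : 0 < n := by omega
  haveI : NeZero n := ⟨hnpos.ne'⟩
  have hvert1 : ∀ k : ZMod n, vv (i0 + (k + 1).val) = vv (i0 + k.val + 1) := by
    intro k
    have hklt : k.val < n := ZMod.val_lt k
    have hadd : (k + 1).val = (k.val + 1) % n := by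
      rw [ZMod.val_add, ZMod.val_one_eq_one_mod]
      conv_rhs => rw [Nat.add_mod, Nat.mod_eq_of_lt hklt]
    by_cases hcase : k.val + 1 < n
    · rw [hadd, Nat.mod_eq_of_lt hcase]
      congr 1
    · have h1 : k.val + 1 = n := by omega
      rw [hadd, h1, Nat.mod_self, Nat.add_zero]
      have h2 : i0 + k.val + 1 = j0 := by omega
      rw [h2]
      exact hveq
  have hvalbound : ∀ k : ZMod n, i0 + k.val < j0 := by
    intro k
    have := ZMod.val_lt k
    omega
  have hvertInj : Function.Injective (fun k : ZMod n => vv (i0 + k.val)) := by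
    intro a b hab2
    by_contra hne2
    have hv : a.val ≠ b.val := fun h => hne2 (ZMod.val_injective n h)
    rcases lt_or_gt_of_ne hv with h | h
    · exact hinj (i0 + a.val) (i0 + b.val) (by omega) (hvalbound b) hab2
    · exact hinj (i0 + b.val) (i0 + a.val) (by omega) (hvalbound a) hab2.symm
  refine ⟨⟨n, hnpos, fun k => vv (i0 + k.val), fun k => ev (i0 + k.val),
    fun k => decide (0 < u (ev (i0 + k.val))), hvertInj, ?_, ?_⟩, ?_⟩
  · -- edge injectivity
    intro a b hab2
    simp only at hab2
    have ha := hOut (i0 + a.val)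
    have hb := hOut (i0 + b.val)
    rcases ha with ⟨hp, hs⟩ | ⟨hneg, ht⟩
    · rcases hb with ⟨hp', hs'⟩ | ⟨hn', ht'⟩
      · apply hvertInj
        show vv (i0 + a.val) = vv (i0 + b.val)
        rw [← hs, ← hs', hab2]
      · rw [hab2] at hp
        linarith
    · rcases hb with ⟨hp', hs'⟩ | ⟨hn', ht'⟩
      · rw [hab2] at hneg
        linarith
      · apply hvertInj
        show vv (i0 + a.val) = vv (i0 + b.val)
        rw [← ht, ← ht', hab2]
  · -- incidence
    intro k
    have ho := hOut (i0 + k.val)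
    have hnx := hnext (i0 + k.val)
    rcases ho with ⟨hp, hs⟩ | ⟨hneg, ht⟩
    · left
      refine ⟨by simp [hp], hs, ?_⟩
      show G.tgt (ev (i0 + k.val)) = vv (i0 + (k + 1).val)
      rw [hvert1 k, hnx, nxt, if_pos hp]
    · right
      refine ⟨by simp; linarith, ?_, ht⟩
      show G.src (ev (i0 + k.val)) = vv (i0 + (k + 1).val)
      rw [hvert1 k, hnx, nxt, if_neg (by linarith)]
  · -- conformity
    intro k
    constructor
    · intro hd
      exact of_decide_eq_true hd
    · intro hd
      have hnd := of_decide_eq_false hd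
      rcases hOut (i0 + k.val) with ⟨hp, _⟩ | ⟨hneg, _⟩
      · exact absurd hp hnd
      · exact hneg

lemma decompose (G : Multigraph) : ∀ (N : ℕ) (u : G.E → ℝ), u ∈ G.H1 →
    (∀ e, ∃ z : ℤ, u e = z) → (∑ e : G.E, |u e|) ≤ (N : ℝ) →
    ∃ (J : ℕ) (D : Fin J → Circuit G),
      (∀ j, Conforms u (D j)) ∧ u = ∑ j : Fin J, (D j).chain := by
  intro N
  induction N with
  | zero =>
    intro u hu hint hle
    have hz : u = 0 := by
      funext e
      have h1 : ∀ e ∈ Finset.univ, (0 : ℝ) ≤ |u e| := fun _ _ => abs_nonneg _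
      have hs0 : ∑ e : G.E, |u e| = 0 :=
        le_antisymm (by exact_mod_cast hle) (Finset.sum_nonneg h1)
      have := (Finset.sum_eq_zero_iff_of_nonneg h1).mp hs0 e (Finset.mem_univ e)
      exact abs_eq_zero.mp this
    exact ⟨0, Fin.elim0, fun j => j.elim0, by rw [hz]; simp⟩
  | succ N ih =>
    intro u hu hint hle
    by_cases hz : u = 0
    · exact ⟨0, Fin.elim0, fun j => j.elim0, by rw [hz]; simp⟩
    obtain ⟨C, hC⟩ := exists_conforming u hu hz
    haveI : NeZero C.n := ⟨C.npos.ne'⟩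
    set u' : G.E → ℝ := u - C.chain with hu'def
    have hu'mem : u' ∈ G.H1 := Submodule.sub_mem _ hu C.chain_mem_H1
    have hu'e : ∀ e, u' e = u e - C.chain e := fun e => rfl
    have hedge : ∀ e, |u' e| ≤ |u e| ∧ (0 < u' e → 0 < u e) ∧ (u' e < 0 → u e < 0) ∧
        (∃ z : ℤ, u' e = z) := by
      intro e
      obtain ⟨z, hze⟩ := hint e
      by_cases hmem : ∃ i, C.edge i = e
      · obtain ⟨i, rfl⟩ := hmem
        cases hdi : C.dir i
        · have hneg : u (C.edge i) < 0 := (hC i).2 hdi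
          have hch : C.chain (C.edge i) = -1 := by rw [C.chain_apply i, hdi]; simp
          have hzneg : (z : ℝ) ≤ -1 := by
            have h1 : z < 0 := by exact_mod_cast hze ▸ hneg
            have h2 : z ≤ -1 := by omega
            exact_mod_cast h2
          have hueq : u' (C.edge i) = z + 1 := by rw [hu'e, hch, hze]; ring
          refine ⟨?_, ?_, ?_, ⟨z + 1, by rw [hueq]; push_cast; ring⟩⟩
          · rw [hueq, hze, abs_of_nonpos (by linarith), abs_of_nonpos (by linarith)]
            linarith
          · rw [hueq]; intro h; linarith
          · rw [hueq, hze]; intro h; linarith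
        · have hpos : 0 < u (C.edge i) := (hC i).1 hdi
          have hch : C.chain (C.edge i) = 1 := by rw [C.chain_apply i, hdi]; simp
          have hzpos : (1 : ℝ) ≤ (z : ℝ) := by
            have h1 : 0 < z := by exact_mod_cast hze ▸ hpos
            have h2 : 1 ≤ z := by omega
            exact_mod_cast h2
          have hueq : u' (C.edge i) = z - 1 := by rw [hu'e, hch, hze]
          refine ⟨?_, ?_, ?_, ⟨z - 1, by rw [hueq]; push_cast; ring⟩⟩
          · rw [hueq, hze, abs_of_nonneg (by linarith), abs_of_nonneg (by linarith)]
            linarith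
          · rw [hueq, hze]; intro h; linarith
          · rw [hueq]; intro h; linarith
      · push_neg at hmem
        have hch := C.chain_eq_zero hmem
        have h0 : u' e = u e := by rw [hu'e, hch, sub_zero]
        rw [h0]
        exact ⟨le_rfl, id, id, hint e⟩
    have he0 : |u' (C.edge 0)| ≤ |u (C.edge 0)| - 1 := by
      obtain ⟨z, hze⟩ := hint (C.edge 0)
      cases hdi : C.dir 0
      · have hneg : u (C.edge 0) < 0 := (hC 0).2 hdi
        have hch : C.chain (C.edge 0) = -1 := by rw [C.chain_apply 0, hdi]; simp
        have hzneg : (z : ℝ) ≤ -1 := by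
          have h1 : z < 0 := by exact_mod_cast hze ▸ hneg
          have h2 : z ≤ -1 := by omega
          exact_mod_cast h2
        have hueq : u' (C.edge 0) = z + 1 := by rw [hu'e, hch, hze]; ring
        rw [hueq, hze, abs_of_nonpos (by linarith), abs_of_nonpos (by linarith)]
        linarith
      · have hpos : 0 < u (C.edge 0) := (hC 0).1 hdi
        have hch : C.chain (C.edge 0) = 1 := by rw [C.chain_apply 0, hdi]; simp
        have hzpos : (1 : ℝ) ≤ (z : ℝ) := by
          have h1 : 0 < z := by exact_mod_cast hze ▸ hpos
          have h2 : 1 ≤ z := by omega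
          exact_mod_cast h2
        have hueq : u' (C.edge 0) = z - 1 := by rw [hu'e, hch, hze]
        rw [hueq, hze, abs_of_nonneg (by linarith), abs_of_nonneg (by linarith)]
    have hsum' : (∑ e : G.E, |u' e|) ≤ (N : ℝ) := by
      have hA := Finset.add_sum_erase Finset.univ (fun e => |u' e|) (Finset.mem_univ (C.edge 0))
      have hB := Finset.add_sum_erase Finset.univ (fun e => |u e|) (Finset.mem_univ (C.edge 0))
      have hC2 : ∑ e ∈ Finset.univ.erase (C.edge 0), |u' e| ≤
          ∑ e ∈ Finset.univ.erase (C.edge 0), |u e| :=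
        Finset.sum_le_sum fun e _ => (hedge e).1
      have hle' : (∑ e : G.E, |u e|) ≤ (N : ℝ) + 1 := by push_cast at hle; linarith
      linarith
    obtain ⟨J, D, hconf, hsum⟩ := ih u' hu'mem (fun e => (hedge e).2.2.2) hsum'
    refine ⟨J + 1, Fin.cons C D, ?_, ?_⟩
    · intro j
      refine Fin.cases ?_ ?_ j
      · simpa using hC
      · intro i
        simp only [Fin.cons_succ]
        intro k
        exact ⟨fun hd => (hedge _).2.1 ((hconf i k).1 hd),
          fun hd => (hedge _).2.2.1 ((hconf i k).2 hd)⟩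
    · rw [Fin.sum_univ_succ]
      simp only [Fin.cons_zero, Fin.cons_succ]
      rw [← hsum, hu'def]
      abel

end Multigraph

open Multigraph in
/-- **Lemma A2.** Given two oriented simple circuits `C₁, C₂` of `G`, there exist oriented
simple circuits `{D_j}` such that no edge is traversed in opposite directions by two of the
`D_j` (their coordinates on each edge are never of opposite signs), and
`[C₁ + C₂] = Σ_j [D_j]` in `H_1(G,ℝ)`. -/
theorem circuit_sum_decomposition
    (G : Multigraph) (C₁ C₂ : Multigraph.Circuit G) :
    ∃ (J : ℕ) (D : Fin J → Multigraph.Circuit G),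
      (∀ e : G.E, ∀ j j' : Fin J, ¬((D j).chain e > 0 ∧ (D j').chain e < 0)) ∧
      C₁.chain + C₂.chain = ∑ j : Fin J, (D j).chain := by
  set u : G.E → ℝ := C₁.chain + C₂.chain with hudef
  have hu : u ∈ G.H1 := Submodule.add_mem _ C₁.chain_mem_H1 C₂.chain_mem_H1
  have hint : ∀ e, ∃ z : ℤ, u e = z := by
    intro e
    obtain ⟨z1, h1⟩ := C₁.chain_int e
    obtain ⟨z2, h2⟩ := C₂.chain_int e
    exact ⟨z1 + z2, by show C₁.chain e + C₂.chain e = _; rw [h1, h2]; push_cast; ring⟩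
  have hbound : (∑ e : G.E, |u e|) ≤ ((2 * Fintype.card G.E : ℕ) : ℝ) := by
    calc (∑ e : G.E, |u e|) ≤ ∑ _e : G.E, (2 : ℝ) := by
          refine Finset.sum_le_sum fun e _ => ?_
          have h1 := C₁.abs_chain_le_one e
          have h2 := C₂.abs_chain_le_one e
          have h3 : |u e| ≤ |C₁.chain e| + |C₂.chain e| := abs_add_le _ _
          linarith
      _ = ((2 * Fintype.card G.E : ℕ) : ℝ) := by
          rw [Finset.sum_const, Finset.card_univ, nsmul_eq_mul]
          push_cast
          ring
  obtain ⟨J, D, hconf, hsum⟩ := Multigraph.decompose G (2 * Fintype.card G.E) u hu hint hbound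
  refine ⟨J, D, ?_, hsum⟩
  rintro e j j' ⟨hpos, hneg⟩
  have h1 := (Multigraph.Conforms.sign (hconf j) e).1 hpos
  have h2 := (Multigraph.Conforms.sign (hconf j') e).2 hneg
  linarith
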